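/- Filtration theorem for HXPath=: let M be an abstract hybrid data model, Σ a closed set of node expressions, and M^f a filtration of M through Σ. Then (1) for every φ ∈ Σ and every point m, M^f,[m] ⊨ φ iff M,m ⊨ φ; and (2) for every path expression α with ⟨α⟩⊤ ∈ Σ and all points m,n: M^f,[m],[n] ⊨ α iff for every m' ∈ [m] there exists n' ∈ [n] with M,m',n' ⊨ α. -/

import Mathlib

mutual
inductive PExp (P N M E : Type) : Type
  | mod : M → PExp P N M E
  | at_ : N → PExp P N M E
  | test : NExp P N M E → PExp P N M E
  | comp : PExp P N M E → PExp P N M E → PExp P N M E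
  | union : PExp P N M E → PExp P N M E → PExp P N M E
inductive NExp (P N M E : Type) : Type
  | prop : P → NExp P N M E
  | nom : N → NExp P N M E
  | neg : NExp P N M E → NExp P N M E
  | conj : NExp P N M E → NExp P N M E → NExp P N M E
  | cmpEq : E → PExp P N M E → PExp P N M E → NExp P N M E
  | cmpNeq : E → PExp P N M E → PExp P N M E → NExp P N M E
end

/-- An abstract hybrid data model (the requirement that each `sim e` is an
equivalence relation is stated as a separate hypothesis where needed). -/
structure Model (P N M E : Type) where
  W : Type
  sim : E → W → W → Prop
  R : M → W → W → Prop
  V : W → P → Prop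
  nom : N → W

mutual
def psat {P N M E : Type} (𝔐 : Model P N M E) : PExp P N M E → 𝔐.W → 𝔐.W → Prop
  | .mod a, m, n => 𝔐.R a m n
  | .at_ i, _, n => 𝔐.nom i = n
  | .test φ, m, n => m = n ∧ nsat 𝔐 φ m
  | .comp α β, m, n => ∃ l, psat 𝔐 α m l ∧ psat 𝔐 β l n
  | .union α β, m, n => psat 𝔐 α m n ∨ psat 𝔐 β m n
def nsat {P N M E : Type} (𝔐 : Model P N M E) : NExp P N M E → 𝔐.W → Prop
  | .prop p, m => 𝔐.V m p
  | .nom i, m => 𝔐.nom i = m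
  | .neg φ, m => ¬ nsat 𝔐 φ m
  | .conj φ ψ, m => nsat 𝔐 φ m ∧ nsat 𝔐 ψ m
  | .cmpEq e α β, m => ∃ n l, psat 𝔐 α m n ∧ psat 𝔐 β m l ∧ 𝔐.sim e n l
  | .cmpNeq e α β, m => ∃ n l, psat 𝔐 α m n ∧ psat 𝔐 β m l ∧ ¬ 𝔐.sim e n l
end

variable {P N M E : Type}

/-- `⊤` defined from a given node expression: `¬(φ ∧ ¬φ)`. -/
def NExp.top (φ : NExp P N M E) : NExp P N M E := .neg (.conj φ (.neg φ))

/-- `⟨α⟩⊤`, with `⊤ := ¬(θ₀ ∧ ¬θ₀)` and equality symbol `e₀`. -/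
def dT (e₀ : E) (θ₀ : NExp P N M E) (α : PExp P N M E) : NExp P N M E :=
  .cmpEq e₀ (α.comp (.test (NExp.top θ₀))) (α.comp (.test (NExp.top θ₀)))

/-- A closed set of node expressions. -/
def ClosedSet (e₀ : E) (θ₀ : NExp P N M E) (Sg : Set (NExp P N M E)) : Prop :=
  (∀ φ, NExp.neg φ ∈ Sg → φ ∈ Sg) ∧
  (∀ φ ψ, NExp.conj φ ψ ∈ Sg → φ ∈ Sg ∧ ψ ∈ Sg) ∧
  (∀ e α β, NExp.cmpEq e α β ∈ Sg → dT e₀ θ₀ α ∈ Sg ∧ dT e₀ θ₀ β ∈ Sg) ∧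
  (∀ e α β, NExp.cmpNeq e α β ∈ Sg → dT e₀ θ₀ α ∈ Sg ∧ dT e₀ θ₀ β ∈ Sg) ∧
  (∀ φ, dT e₀ θ₀ (.test φ) ∈ Sg → φ ∈ Sg) ∧
  (∀ i, dT e₀ θ₀ (.at_ i) ∈ Sg → NExp.nom i ∈ Sg) ∧
  (∀ α β, dT e₀ θ₀ (.comp α β) ∈ Sg → dT e₀ θ₀ α ∈ Sg ∧ dT e₀ θ₀ β ∈ Sg) ∧
  (∀ α β, dT e₀ θ₀ (.union α β) ∈ Sg → dT e₀ θ₀ α ∈ Sg ∧ dT e₀ θ₀ β ∈ Sg)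

/-- `𝔐f` is a filtration of `𝔐` through `Sg`, presented via the quotient map
`f` sending each point to its class (`f m = [m]`). -/
structure IsFiltrationHX (𝔐 𝔐f : Model P N M E) (e₀ : E) (θ₀ : NExp P N M E)
    (Sg : Set (NExp P N M E)) (f : 𝔐.W → 𝔐f.W) : Prop where
  surj : Function.Surjective f
  resp : ∀ m n, f m = f n ↔ (∀ φ ∈ Sg, (nsat 𝔐 φ m ↔ nsat 𝔐 φ n))
  r1 : ∀ a m n, 𝔐.R a m n → 𝔐f.R a (f m) (f n)
  r2 : ∀ a m n, 𝔐f.R a (f m) (f n) → dT e₀ θ₀ (.mod a) ∈ Sg →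
        ∀ m', f m' = f m → ∃ n', f n' = f n ∧ 𝔐.R a m' n'
  simf : ∀ e m n, (𝔐f.sim e (f m) (f n) ↔ 𝔐.sim e m n)
  nomf : ∀ i, 𝔐f.nom i = f (𝔐.nom i)
  Vf : ∀ m p, (𝔐f.V (f m) p ↔ 𝔐.V m p)

/-!
Simultaneous induction on node and path expressions: the truth lemma for node expressions in
`Sg`, together with, for `⟨α⟩⊤ ∈ Sg`, "`[m] α [n]` in `𝔐f` iff `m` has an `α`-successor in
`[n]`"; closure of `Sg` makes the induction hypotheses available for all subexpressions.
Atomic steps use the two conditions on `R_a^f`, tests use the truth lemma, composition chains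
the lifted steps through a representative of the middle class, and data comparisons transfer
because `∼_e^f` is `∼_e` read on representatives.
-/

section ClosedSet

variable {e₀ : E} {θ₀ : NExp P N M E} {Sg : Set (NExp P N M E)}

theorem ClosedSet.mem_of_neg_mem (hc : ClosedSet e₀ θ₀ Sg) {φ : NExp P N M E}
    (h : NExp.neg φ ∈ Sg) : φ ∈ Sg :=
  hc.1 φ h

theorem ClosedSet.mem_of_conj_mem (hc : ClosedSet e₀ θ₀ Sg) {φ ψ : NExp P N M E}
    (h : NExp.conj φ ψ ∈ Sg) : φ ∈ Sg ∧ ψ ∈ Sg :=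
  hc.2.1 φ ψ h

theorem ClosedSet.dT_mem_of_cmpEq_mem (hc : ClosedSet e₀ θ₀ Sg) {e : E}
    {α β : PExp P N M E} (h : NExp.cmpEq e α β ∈ Sg) : dT e₀ θ₀ α ∈ Sg ∧ dT e₀ θ₀ β ∈ Sg :=
  hc.2.2.1 e α β h

theorem ClosedSet.dT_mem_of_cmpNeq_mem (hc : ClosedSet e₀ θ₀ Sg) {e : E}
    {α β : PExp P N M E} (h : NExp.cmpNeq e α β ∈ Sg) : dT e₀ θ₀ α ∈ Sg ∧ dT e₀ θ₀ β ∈ Sg :=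
  hc.2.2.2.1 e α β h

theorem ClosedSet.mem_of_dT_test_mem (hc : ClosedSet e₀ θ₀ Sg) {φ : NExp P N M E}
    (h : dT e₀ θ₀ (.test φ) ∈ Sg) : φ ∈ Sg :=
  hc.2.2.2.2.1 φ h

theorem ClosedSet.dT_mem_of_dT_comp_mem (hc : ClosedSet e₀ θ₀ Sg) {α β : PExp P N M E}
    (h : dT e₀ θ₀ (.comp α β) ∈ Sg) : dT e₀ θ₀ α ∈ Sg ∧ dT e₀ θ₀ β ∈ Sg :=
  hc.2.2.2.2.2.2.1 α β h

theorem ClosedSet.dT_mem_of_dT_union_mem (hc : ClosedSet e₀ θ₀ Sg) {α β : PExp P N M E}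
    (h : dT e₀ θ₀ (.union α β) ∈ Sg) : dT e₀ θ₀ α ∈ Sg ∧ dT e₀ θ₀ β ∈ Sg :=
  hc.2.2.2.2.2.2.2 α β h

end ClosedSet

theorem exists_related_witnesses_iff {X Y : Type} {f : X → Y} (hsurj : f.Surjective)
    {A B : X → Prop} {Af Bf : Y → Prop} {S : X → X → Prop} {Sf : Y → Y → Prop}
    (hA : ∀ n, Af (f n) ↔ ∃ n', f n' = f n ∧ A n')
    (hB : ∀ l, Bf (f l) ↔ ∃ l', f l' = f l ∧ B l')
    (hS : ∀ n l, Sf (f n) (f l) ↔ S n l) :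
    (∃ n l, Af n ∧ Bf l ∧ Sf n l) ↔ ∃ n l, A n ∧ B l ∧ S n l := by
  constructor
  · rintro ⟨n, l, hn, hl, hnl⟩
    obtain ⟨n, rfl⟩ := hsurj n
    obtain ⟨l, rfl⟩ := hsurj l
    obtain ⟨n', hn', hAn'⟩ := (hA n).1 hn
    obtain ⟨l', hl', hBl'⟩ := (hB l).1 hl
    exact ⟨n', l', hAn', hBl', (hS n' l').1 (hn' ▸ hl' ▸ hnl)⟩
  · rintro ⟨n, l, hn, hl, hnl⟩
    exact ⟨f n, f l, (hA n).2 ⟨n, rfl, hn⟩, (hB l).2 ⟨l, rfl, hl⟩, (hS n l).2 hnl⟩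

namespace IsFiltrationHX

variable {𝔐 𝔐f : Model P N M E} {e₀ : E} {θ₀ : NExp P N M E} {Sg : Set (NExp P N M E)}
  {f : 𝔐.W → 𝔐f.W}

mutual

theorem nsat_map_iff (hf : IsFiltrationHX 𝔐 𝔐f e₀ θ₀ Sg f) (hc : ClosedSet e₀ θ₀ Sg) :
    ∀ φ : NExp P N M E, φ ∈ Sg → ∀ m, nsat 𝔐f φ (f m) ↔ nsat 𝔐 φ m
  | .prop p, _, m => hf.Vf m p
  | .nom i, hφ, m => by
    simp only [nsat, hf.nomf]
    -- `[nom i] = [m]` forces `nom i = m`, since `m` then satisfies the nominal `i ∈ Sg`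
    exact ⟨fun h => ((hf.resp _ _).1 h _ hφ).1 rfl, congrArg f⟩
  | .neg φ, hφ, m => not_congr (nsat_map_iff hf hc φ (hc.mem_of_neg_mem hφ) m)
  | .conj φ ψ, hφψ, m =>
    and_congr (nsat_map_iff hf hc φ (hc.mem_of_conj_mem hφψ).1 m)
      (nsat_map_iff hf hc ψ (hc.mem_of_conj_mem hφψ).2 m)
  | .cmpEq e α β, hφ, m =>
    exists_related_witnesses_iff hf.surj
      (psat_map_iff_exists hf hc α (hc.dT_mem_of_cmpEq_mem hφ).1 m)
      (psat_map_iff_exists hf hc β (hc.dT_mem_of_cmpEq_mem hφ).2 m) (hf.simf e)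
  | .cmpNeq e α β, hφ, m =>
    exists_related_witnesses_iff hf.surj
      (psat_map_iff_exists hf hc α (hc.dT_mem_of_cmpNeq_mem hφ).1 m)
      (psat_map_iff_exists hf hc β (hc.dT_mem_of_cmpNeq_mem hφ).2 m)
      (fun n l => not_congr (hf.simf e n l))

theorem psat_map_iff_exists (hf : IsFiltrationHX 𝔐 𝔐f e₀ θ₀ Sg f) (hc : ClosedSet e₀ θ₀ Sg) :
    ∀ α : PExp P N M E, dT e₀ θ₀ α ∈ Sg → ∀ m n,
      psat 𝔐f α (f m) (f n) ↔ ∃ n', f n' = f n ∧ psat 𝔐 α m n'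
  | .mod a, hα, m, n =>
    ⟨fun h => hf.r2 a m n h hα m rfl, fun ⟨n', hn', h⟩ => hn' ▸ hf.r1 a m n' h⟩
  | .at_ i, _, m, n => by
    simp only [psat, hf.nomf, exists_eq_right']
  | .test φ, hα, m, n => by
    simp only [psat, nsat_map_iff hf hc φ (hc.mem_of_dT_test_mem hα)]
    exact ⟨fun ⟨hmn, hφ⟩ => ⟨m, hmn, rfl, hφ⟩, fun ⟨_, hmn, hm, hφ⟩ => ⟨hm ▸ hmn, hφ⟩⟩
  | .comp α β, hαβ, m, n => by
    have IHα := psat_map_iff_exists hf hc α (hc.dT_mem_of_dT_comp_mem hαβ).1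
    have IHβ := psat_map_iff_exists hf hc β (hc.dT_mem_of_dT_comp_mem hαβ).2
    constructor
    · rintro ⟨l, hαl, hβl⟩
      obtain ⟨l, rfl⟩ := hf.surj l
      obtain ⟨l', hl', hαl'⟩ := (IHα m l).1 hαl
      obtain ⟨n', hn', hβn'⟩ := (IHβ l' n).1 (hl' ▸ hβl)
      exact ⟨n', hn', l', hαl', hβn'⟩
    · rintro ⟨n', hn', l, hαl, hβl⟩
      exact ⟨f l, (IHα m l).2 ⟨l, rfl, hαl⟩, hn' ▸ (IHβ l n').2 ⟨n', rfl, hβl⟩⟩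
  | .union α β, hαβ, m, n => by
    simp only [psat, psat_map_iff_exists hf hc α (hc.dT_mem_of_dT_union_mem hαβ).1,
      psat_map_iff_exists hf hc β (hc.dT_mem_of_dT_union_mem hαβ).2, and_or_left, exists_or]

end

end IsFiltrationHX

/-- Filtration theorem: truth of formulas in a closed set `Sg` is preserved by
filtrations, and a path expression `α` with `⟨α⟩⊤ ∈ Sg` holds between classes
`[m],[n]` iff every member of `[m]` has an `α`-successor in `[n]`. -/
theorem filtration_theorem (𝔐 𝔐f : Model P N M E) (e₀ : E) (θ₀ : NExp P N M E)
    (Sg : Set (NExp P N M E)) (f : 𝔐.W → 𝔐f.W)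
    (hclosed : ClosedSet e₀ θ₀ Sg) (hfilt : IsFiltrationHX 𝔐 𝔐f e₀ θ₀ Sg f) :
    (∀ φ ∈ Sg, ∀ m, (nsat 𝔐f φ (f m) ↔ nsat 𝔐 φ m)) ∧
    (∀ α : PExp P N M E, dT e₀ θ₀ α ∈ Sg → ∀ m n,
      (psat 𝔐f α (f m) (f n) ↔
        ∀ m', f m' = f m → ∃ n', f n' = f n ∧ psat 𝔐 α m' n')) := by
  refine ⟨hfilt.nsat_map_iff hclosed, fun α hα m n => ?_⟩
  have hlift := hfilt.psat_map_iff_exists hclosed α hα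
  exact ⟨fun h m' hm' => (hlift m' n).1 (hm' ▸ h), fun h => (hlift m n).2 (h m rfl)⟩
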